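/- arXiv:1403.6386 — 3 statements merged into one kernel-verified Lean document; each statement's English description precedes it below -/
import Mathlib

section
/- Let T be an ℓ-complete tree decomposition of a graph G rooted at a node u, let v be a node of T distinct from u, and let α be a (V∖B_u)-coherent coloring of G such that some color a does not appear on B_u. If some vertex of B_v is colored a by α, then every bag of T_v (the subtree of T rooted at v) contains a vertex colored a by α. -/
open SimpleGraph

/-- A proper `k`-coloring of a graph. -/
def Proper {V : Type} (G : SimpleGraph V) {k : ℕ} (c : V → Fin k) : Prop :=
  ∀ ⦃x y⦄, G.Adj x y → c x ≠ c y

/-- The `k`-recoloring graph of `G`: vertices are the proper `k`-colorings of `G`,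
two colorings being adjacent when they differ on exactly one vertex. -/
def recolorGraph {V : Type} (G : SimpleGraph V) (k : ℕ) :
    SimpleGraph {c : V → Fin k // Proper G c} where
  Adj c d := ∃! v, c.1 v ≠ d.1 v
  symm := by
    constructor
    rintro c d ⟨v, hv, hu⟩
    exact ⟨v, hv.symm, fun w hw => hu w hw.symm⟩
  loopless := by
    constructor
    rintro c ⟨v, hv, -⟩
    exact hv rfl

/-- `c` is a greedy (grundy) coloring of `G` relative to some vertex order:
equivalently, it is proper and every vertex sees every smaller color in its
neighborhood. -/
def IsGrundy {V : Type} (G : SimpleGraph V) (c : V → ℕ) : Prop :=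
  (∀ ⦃x y⦄, G.Adj x y → c x ≠ c y) ∧ ∀ v, ∀ j < c v, ∃ u, G.Adj v u ∧ c u = j

/-- The grundy number of `G`: the largest number of colors of a greedy coloring. -/
noncomputable def grundyNum {V : Type} [Fintype V] (G : SimpleGraph V) : ℕ :=
  sSup {ℓ | ∃ c : V → ℕ, IsGrundy G c ∧ (Finset.univ.image c).card = ℓ}

/-- A tree decomposition of the graph `G`, with nodes indexed by `ι`. -/
structure TreeDecomp {V : Type} (G : SimpleGraph V) (ι : Type) where
  T : SimpleGraph ι
  isTree : T.IsTree
  bag : ι → Finset V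
  mem_bag : ∀ x : V, ∃ u, x ∈ bag u
  edge_bag : ∀ ⦃x y⦄, G.Adj x y → ∃ u, x ∈ bag u ∧ y ∈ bag u
  support_connected : ∀ x : V, (T.induce {u | x ∈ bag u}).Connected

/-- The treewidth of a finite graph: the least `w` such that some tree decomposition
has all bags of size at most `w + 1`. -/
noncomputable def treewidth {V : Type} [Fintype V] (G : SimpleGraph V) : ℕ :=
  sInf {w | ∃ (m : ℕ) (td : TreeDecomp G (Fin m)), ∀ u, (td.bag u).card ≤ w + 1}

/-- An `ℓ`-complete tree decomposition: every bag has size `ℓ+1` and adjacent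
bags intersect on `ℓ` vertices. -/
def TreeDecomp.IsComplete {V ι : Type} [DecidableEq V] {G : SimpleGraph V}
    (td : TreeDecomp G ι) (ℓ : ℕ) : Prop :=
  (∀ u, (td.bag u).card = ℓ + 1) ∧
  ∀ ⦃u v⦄, td.T.Adj u v → (td.bag u ∩ td.bag v).card = ℓ

/-- `x` and `y` are `T`-parents: for some adjacent nodes `u, v`,
`x = B_u ∖ B_v` and `y = B_v ∖ B_u`. -/
def TreeDecomp.Parent {V ι : Type} [DecidableEq V] {G : SimpleGraph V}
    (td : TreeDecomp G ι) (x y : V) : Prop :=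
  ∃ u v, td.T.Adj u v ∧ td.bag u \ td.bag v = {x} ∧ td.bag v \ td.bag u = {y}

/-- A coloring is `X`-coherent (relative to a tree decomposition) if parents in `X`
get the same color and every vertex of `X` is the unique vertex of its color in
every bag containing it. -/
def TreeDecomp.Coherent {V ι : Type} [DecidableEq V] {G : SimpleGraph V}
    (td : TreeDecomp G ι) (X : Set V) {k : ℕ} (c : V → Fin k) : Prop :=
  (∀ ⦃x y⦄, x ∈ X → y ∈ X → td.Parent x y → c x = c y) ∧
  ∀ u, ∀ x ∈ X, x ∈ td.bag u → ∀ y ∈ td.bag u, c y = c x → y = x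

/-- The subtree rooted at `v` when `T` is rooted at `u`: the nodes all of whose
walks to the root `u` pass through `v`. -/
def subtreeAt {ι : Type} (T : SimpleGraph ι) (u v : ι) : Set ι :=
  {p | ∀ w : T.Walk p u, v ∈ w.support}

/-- `G` contains an induced path on four vertices. -/
def HasInducedP4 {V : Type} (G : SimpleGraph V) : Prop :=
  ∃ a b c d : V, a ≠ b ∧ a ≠ c ∧ a ≠ d ∧ b ≠ c ∧ b ≠ d ∧ c ≠ d ∧
    G.Adj a b ∧ G.Adj b c ∧ G.Adj c d ∧ ¬G.Adj a c ∧ ¬G.Adj a d ∧ ¬G.Adj b d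

/-- `G` contains an induced path on five vertices. -/
def HasInducedP5 {V : Type} (G : SimpleGraph V) : Prop :=
  ∃ a b c d e : V, a ≠ b ∧ a ≠ c ∧ a ≠ d ∧ a ≠ e ∧ b ≠ c ∧ b ≠ d ∧ b ≠ e ∧
    c ≠ d ∧ c ≠ e ∧ d ≠ e ∧
    G.Adj a b ∧ G.Adj b c ∧ G.Adj c d ∧ G.Adj d e ∧
    ¬G.Adj a c ∧ ¬G.Adj a d ∧ ¬G.Adj a e ∧ ¬G.Adj b d ∧ ¬G.Adj b e ∧ ¬G.Adj c e

/-- A walk is an induced path if it is a path and the only adjacencies among its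
vertices are its own edges. -/
def IsInducedPathW {V : Type} (G : SimpleGraph V) {x y : V} (p : G.Walk x y) : Prop :=
  p.IsPath ∧ ∀ ⦃u v⦄, u ∈ p.support → v ∈ p.support → G.Adj u v → s(u, v) ∈ p.edges

/-- A graph is distance-hereditary if any two induced paths between the same pair of
vertices have the same length. -/
def IsDistanceHereditary {V : Type} (G : SimpleGraph V) : Prop :=
  ∀ (x y : V) (p q : G.Walk x y),
    IsInducedPathW G p → IsInducedPathW G q → p.length = q.length

/-- `X` is a module of `G`: every outside vertex is adjacent to all of `X` or none of it. -/
def IsModule {V : Type} (G : SimpleGraph V) (X : Set V) : Prop :=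
  ∀ y ∉ X, (∀ x ∈ X, G.Adj y x) ∨ ∀ x ∈ X, ¬G.Adj y x

/-- `X` is a strong module of `G`: a module of size at least two which overlaps
no other module. -/
def IsStrongModule {V : Type} (G : SimpleGraph V) (X : Set V) : Prop :=
  IsModule G X ∧ 2 ≤ X.ncard ∧
    ∀ M : Set V, IsModule G M → Disjoint M X ∨ M ⊆ X ∨ X ⊆ M

/-- The setoid identifying all elements of `C`. -/
def mergedSetoid {V : Type} (C : Set V) : Setoid V where
  r x y := x = y ∨ (x ∈ C ∧ y ∈ C)
  iseqv := by
    refine ⟨fun x => Or.inl rfl, ?_, ?_⟩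
    · rintro x y (rfl | ⟨h1, h2⟩)
      · exact Or.inl rfl
      · exact Or.inr ⟨h2, h1⟩
    · rintro x y z (rfl | ⟨h1, h2⟩) (rfl | ⟨h3, h4⟩)
      · exact Or.inl rfl
      · exact Or.inr ⟨h3, h4⟩
      · exact Or.inr ⟨h1, h2⟩
      · exact Or.inr ⟨h1, h4⟩

/-- The merged graph on an independent set `C`: all vertices of `C` are identified
into a single vertex. -/
def mergedGraph {V : Type} (G : SimpleGraph V) (C : Set V)
    (hC : ∀ x ∈ C, ∀ y ∈ C, ¬G.Adj x y) :
    SimpleGraph (Quotient (mergedSetoid C)) where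
  Adj a b := ∃ x y, G.Adj x y ∧ Quotient.mk (mergedSetoid C) x = a ∧
    Quotient.mk (mergedSetoid C) y = b
  symm := by
    constructor
    rintro a b ⟨x, y, hxy, rfl, rfl⟩
    exact ⟨y, x, hxy.symm, rfl, rfl⟩
  loopless := by
    constructor
    rintro a ⟨x, y, hxy, rfl, h⟩
    rcases Quotient.exact h with rfl | ⟨h1, h2⟩
    · exact G.irrefl hxy
    · exact hC x h2 y h1 hxy

/-- `α` can be transformed into `β` by single-vertex recolorings through proper
`k`-colorings of `G`, recoloring each vertex `v` at most `bound v` times. -/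
def RecolorSeqLe {V : Type} (G : SimpleGraph V) {k : ℕ} (α β : V → Fin k)
    (bound : V → ℕ) : Prop :=
  ∃ (m : ℕ) (c : ℕ → V → Fin k),
    c 0 = α ∧ c m = β ∧ (∀ i ≤ m, Proper G (c i)) ∧
    (∀ i < m, ∃! v, c i v ≠ c (i + 1) v) ∧
    ∀ v, ((Finset.range m).filter fun i => c i v ≠ c (i + 1) v).card ≤ bound v

/-- A modular coloring: for every strong module `M` which is the disjoint union of
`p ≥ 2` strong modules `Ms 0, …, Ms (p-1)`, the coloring uses exactly `χ(H[M])`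
colors on `M`, and each `Ms i` receives exactly the first `χ(H[Ms i])` of those colors. -/
def ModularColoring {W : Type} (H : SimpleGraph W) {k : ℕ} (c : W → Fin k) : Prop :=
  ∀ (M : Set W) (p : ℕ) (Ms : Fin p → Set W), 2 ≤ p →
    IsStrongModule H M → (∀ i, IsStrongModule H (Ms i)) →
    (Pairwise fun i j => Disjoint (Ms i) (Ms j)) →
    M = ⋃ i, Ms i →
    (∀ i j, i ≠ j → ∀ x ∈ Ms i, ∀ y ∈ Ms j, ¬H.Adj x y) →
    ((c '' M).ncard : ℕ∞) = (H.induce M).chromaticNumber ∧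
    ∀ i, ((c '' Ms i).ncard : ℕ∞) = (H.induce (Ms i)).chromaticNumber ∧
      ∀ a ∈ c '' Ms i, ∀ b ∈ c '' M, b ≤ a → b ∈ c '' Ms i

/-- A frozen `k`-coloring: a proper coloring in which every vertex sees every other
color in its neighborhood. -/
def Frozen {V : Type} (G : SimpleGraph V) {k : ℕ} (c : V → Fin k) : Prop :=
  Proper G c ∧ ∀ x, ∀ b : Fin k, b ≠ c x → ∃ y, G.Adj x y ∧ c y = b

/-!
Walk from a node `p` of the subtree up to the root `u` along the tree path; it passes through `v`,
so by induction from `v` downwards it suffices to push the colour `a` from a node `q` to its child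
`p`. By completeness `B_q ∖ B_p = {z}` and `B_p ∖ B_q = {y}`, so `z` and `y` are `T`-parents. If
the `a`-coloured vertex of `B_q` is not in `B_p`, it is `z`; it lies outside `B_u` because `a` is
missing from `B_u`, and so does `y`, since the bags containing `y` form a subtree and `q` lies on
the path from `p` to `u`. Coherence then gives `α y = α z = a`.
-/

namespace TreeDecomp

variable {V ι : Type} {G : SimpleGraph V}

theorem IsComplete.card_sdiff_eq_one [DecidableEq V] {td : TreeDecomp G ι} {ℓ : ℕ}
    (hcomp : td.IsComplete ℓ) {p q : ι} (h : td.T.Adj p q) :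
    (td.bag p \ td.bag q).card = 1 := by
  have := Finset.card_sdiff_add_card_inter (td.bag p) (td.bag q)
  rw [hcomp.1 p, hcomp.2 h] at this
  omega

variable (td : TreeDecomp G ι)

theorem mem_bag_of_mem_support_of_isPath {p u w : ι} {W : td.T.Walk p u} (hW : W.IsPath)
    (hw : w ∈ W.support) {y : V} (hp : y ∈ td.bag p) (hu : y ∈ td.bag u) :
    y ∈ td.bag w := by
  classical
  obtain ⟨Wy⟩ := (td.support_connected y).preconnected
    (⟨p, hp⟩ : {w | y ∈ td.bag w}) ⟨u, hu⟩
  let Wt := Wy.map (Embedding.induce {w | y ∈ td.bag w}).toHom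
  have hWt : ∀ w ∈ Wt.support, y ∈ td.bag w := by
    simp only [Wt, Walk.support_map, List.mem_map]
    rintro _ ⟨s, -, rfl⟩
    exact s.2
  have hbypass : Wt.bypass = W :=
    congrArg Subtype.val
      ((td.isTree.isAcyclic.subsingleton_path p u).elim ⟨_, Wt.bypass_isPath⟩ ⟨W, hW⟩)
  exact hWt w (Wt.support_bypass_subset_support (hbypass ▸ hw))

variable [DecidableEq V] {ℓ k : ℕ} {u : ι} {α : V → Fin k} {a : Fin k}

theorem exists_mem_bag_color_eq_of_adj (hcomp : td.IsComplete ℓ)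
    (hcoh : td.Coherent {x : V | x ∉ td.bag u} α) (ha : ∀ x ∈ td.bag u, α x ≠ a)
    {p q : ι} (h : td.T.Adj p q) {W : td.T.Walk q u} (hW : (W.cons h).IsPath)
    (hq : ∃ z ∈ td.bag q, α z = a) : ∃ y ∈ td.bag p, α y = a := by
  obtain ⟨z, hzq, hza⟩ := hq
  by_cases hzp : z ∈ td.bag p
  · exact ⟨z, hzp, hza⟩
  obtain ⟨z', hz'⟩ := Finset.card_eq_one.mp (hcomp.card_sdiff_eq_one h.symm)
  obtain ⟨y, hy⟩ := Finset.card_eq_one.mp (hcomp.card_sdiff_eq_one h)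
  obtain rfl : z = z' := Finset.mem_singleton.mp (hz' ▸ Finset.mem_sdiff.mpr ⟨hzq, hzp⟩)
  obtain ⟨hyp, hyq⟩ := Finset.mem_sdiff.mp (hy ▸ Finset.mem_singleton_self y)
  have hzu : z ∉ td.bag u := fun hzu => ha z hzu hza
  have hyu : y ∉ td.bag u := fun hyu =>
    hyq (td.mem_bag_of_mem_support_of_isPath hW (by simp) hyp hyu)
  exact ⟨y, hyp, hcoh.1 hzu hyu ⟨q, p, h.symm, hz', hy⟩ ▸ hza⟩

theorem exists_mem_bag_color_eq_of_mem_support (hcomp : td.IsComplete ℓ)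
    (hcoh : td.Coherent {x : V | x ∉ td.bag u} α) (ha : ∀ x ∈ td.bag u, α x ≠ a) {v : ι}
    (hv : ∃ x ∈ td.bag v, α x = a) {p : ι} (W : td.T.Walk p u) (hW : W.IsPath)
    (hvW : v ∈ W.support) : ∃ x ∈ td.bag p, α x = a := by
  induction W with
  | nil =>
    obtain rfl := Walk.mem_support_nil_iff.mp hvW
    exact hv
  | cons h W ih =>
    rcases List.mem_cons.mp (Walk.support_cons _ _ ▸ hvW) with rfl | hvW
    · exact hv
    · exact td.exists_mem_bag_color_eq_of_adj hcomp hcoh ha h hW (ih hcoh ha hW.of_cons hvW)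

end TreeDecomp

theorem color_everywhere_in_subtree_general (n ℓ k : ℕ) (V : Type) [DecidableEq V]
    (G : SimpleGraph V) (td : TreeDecomp G (Fin n)) (hcomp : td.IsComplete ℓ)
    (u v : Fin n)
    (α : V → Fin k)
    (hcoh : td.Coherent {x : V | x ∉ td.bag u} α)
    (a : Fin k) (ha : ∀ x ∈ td.bag u, α x ≠ a)
    (hv : ∃ x ∈ td.bag v, α x = a) :
    ∀ p ∈ subtreeAt td.T u v, ∃ x ∈ td.bag p, α x = a := by
  intro p hp
  obtain ⟨W⟩ := td.isTree.connected.preconnected p u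
  exact td.exists_mem_bag_color_eq_of_mem_support hcomp hcoh ha hv W.bypass W.bypass_isPath
    (hp W.bypass)

/-- Let `T` be an `ℓ`-complete tree decomposition rooted at `u`,
let `v ≠ u`, and let `α` be a `(V ∖ B_u)`-coherent coloring in which some color `a`
does not appear on `B_u`. If some vertex of `B_v` is colored `a`, then every bag of
the subtree rooted at `v` contains a vertex colored `a`. -/
theorem color_everywhere_in_subtree (n ℓ k : ℕ) (V : Type) [DecidableEq V]
    (G : SimpleGraph V) (td : TreeDecomp G (Fin n)) (hcomp : td.IsComplete ℓ)
    (u v : Fin n) (hvu : v ≠ u)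
    (α : V → Fin k) (hα : Proper G α)
    (hcoh : td.Coherent {x : V | x ∉ td.bag u} α)
    (a : Fin k) (ha : ∀ x ∈ td.bag u, α x ≠ a)
    (hv : ∃ x ∈ td.bag v, α x = a) :
    ∀ p ∈ subtreeAt td.T u v, ∃ x ∈ td.bag p, α x = a :=
  color_everywhere_in_subtree_general n ℓ k V G td hcomp u v α hcoh a ha hv
end

section
/- For every graph G and any three strong modules M₁, M₂, M₃ of G with M₁ ⊊ M₂ ⊊ M₃, it is impossible that χ(G[M₁]) = χ(G[M₂]) = χ(G[M₃]); that is, the chromatic numbers of the three induced subgraphs are not all equal. -/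
open SimpleGraph

lemma colorable_induce_mono {V : Type} (G : SimpleGraph V) {S T : Set V} (h : S ⊆ T) {n : ℕ}
    (hc : (G.induce T).Colorable n) : (G.induce S).Colorable n := by
  obtain ⟨C⟩ := hc
  exact ⟨SimpleGraph.Coloring.mk (fun a => C ⟨a.1, h a.2⟩)
    (fun {a b} hab => C.valid (by exact hab))⟩

lemma key_step {V : Type} (G : SimpleGraph V) {S : Set V} {y : V} {k : ℕ}
    (hS : S.Nonempty) (hadj : ∀ x ∈ S, G.Adj y x)
    (hc : (G.induce (insert y S)).Colorable k)
    (hk : (k : ℕ∞) ≤ (G.induce S).chromaticNumber) : False := by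
  classical
  obtain ⟨C⟩ := hc
  set y' : ↥(insert y S) := ⟨y, Set.mem_insert y S⟩ with hy'
  have hval : ∀ a : ↥S, C ⟨a.1, Set.mem_insert_of_mem y a.2⟩ ≠ C y' := by
    intro a h
    exact C.valid (v := ⟨a.1, Set.mem_insert_of_mem y a.2⟩) (w := y')
      (by exact (hadj a.1 a.2).symm) h
  let D : (G.induce S).Coloring {c : Fin k // c ≠ C y'} :=
    SimpleGraph.Coloring.mk (fun a => ⟨C ⟨a.1, Set.mem_insert_of_mem y a.2⟩, hval a⟩)
      (by
        intro a b hab h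
        exact C.valid (v := ⟨a.1, Set.mem_insert_of_mem y a.2⟩)
          (w := ⟨b.1, Set.mem_insert_of_mem y b.2⟩) (by exact hab)
          (by simpa using congrArg Subtype.val h))
  have hcard : Fintype.card {c : Fin k // c ≠ C y'} = k - 1 := by
    have := Fintype.card_subtype_compl (fun c : Fin k => c = C y')
    simpa [Fintype.card_subtype_eq, Fintype.card_fin] using this
  have hcol : (G.induce S).Colorable (k - 1) := hcard ▸ D.colorable
  have hle : (G.induce S).chromaticNumber ≤ ((k - 1 : ℕ) : ℕ∞) := hcol.chromaticNumber_le
  have hk1 : 1 ≤ k := by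
    rcases Nat.eq_zero_or_pos k with rfl | h
    · obtain ⟨x, hx⟩ := hS
      exact (D ⟨x, hx⟩).1.elim0
    · exact h
  have : (k : ℕ∞) ≤ ((k - 1 : ℕ) : ℕ∞) := le_trans hk hle
  rw [Nat.cast_le] at this
  omega

/-- For any three nested strong modules `M₁ ⊊ M₂ ⊊ M₃` of a graph,
the chromatic numbers of the three induced subgraphs cannot all be equal. -/
theorem nested_strong_modules_chromatic (V : Type) [Fintype V] (G : SimpleGraph V)
    (M₁ M₂ M₃ : Set V)
    (h1 : IsStrongModule G M₁) (h2 : IsStrongModule G M₂) (h3 : IsStrongModule G M₃)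
    (h12 : M₁ ⊂ M₂) (h23 : M₂ ⊂ M₃) :
    ¬((G.induce M₁).chromaticNumber = (G.induce M₂).chromaticNumber ∧
      (G.induce M₂).chromaticNumber = (G.induce M₃).chromaticNumber) := by
  classical
  rintro ⟨e12, e23⟩
  have hM1ne : M₁.Nonempty := by
    rcases Set.eq_empty_or_nonempty M₁ with rfl | h
    · have := h1.2.1; simp [Set.ncard_empty] at this
    · exact h
  have hM2ne : M₂.Nonempty := hM1ne.mono h12.subset
  obtain ⟨y2, hy2M2, hy2M1⟩ := Set.exists_of_ssubset h12
  obtain ⟨y3, hy3M3, hy3M2⟩ := Set.exists_of_ssubset h23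
  have : Fintype ↥M₃ := Fintype.ofFinite _
  set k : ℕ := ((G.induce M₃).chromaticNumber).toNat with hkdef
  have hc3 : (G.induce M₃).Colorable k := colorable_chromaticNumber_of_fintype _
  have hk3 : (k : ℕ∞) = (G.induce M₃).chromaticNumber := by
    refine ENat.coe_toNat (ne_top_of_le_ne_top ?_
      ((G.induce M₃).colorable_of_fintype.chromaticNumber_le))
    exact (ENat.coe_lt_top _).ne
  have hA : ∀ y ∈ M₂, y ∉ M₁ → ∀ x ∈ M₁, ¬G.Adj y x := by
    intro y hyM2 hyM1
    rcases h1.1 y hyM1 with hall | hnone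
    · exfalso
      refine key_step G hM1ne hall (colorable_induce_mono G ?_ hc3) ?_
      · exact Set.insert_subset (h23.subset hyM2) (h12.subset.trans h23.subset)
      · rw [hk3, ← e23, ← e12]
    · exact hnone
  have hB : ∀ y ∈ M₃, y ∉ M₂ → ∀ x ∈ M₂, ¬G.Adj y x := by
    intro y hyM3 hyM2
    rcases h2.1 y hyM2 with hall | hnone
    · exfalso
      refine key_step G hM2ne hall (colorable_induce_mono G ?_ hc3) ?_
      · exact Set.insert_subset hyM3 h23.subset
      · rw [hk3, ← e23]
    · exact hnone
  set X : Set V := M₁ ∪ (M₃ \ M₂) with hX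
  have hXmod : IsModule G X := by
    intro z hz
    by_cases hzM2 : z ∈ M₂
    · have hzM1 : z ∉ M₁ := fun h => hz (Or.inl h)
      right
      rintro x (hxM1 | ⟨hxM3, hxM2⟩)
      · exact hA z hzM2 hzM1 x hxM1
      · exact fun h => hB x hxM3 hxM2 z hzM2 h.symm
    · have hzM3 : z ∉ M₃ := fun h => hz (Or.inr ⟨h, hzM2⟩)
      rcases h3.1 z hzM3 with hall | hnone
      · left
        rintro x (hxM1 | ⟨hxM3, _⟩)
        · exact hall x (h12.subset.trans h23.subset hxM1)
        · exact hall x hxM3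
      · right
        rintro x (hxM1 | ⟨hxM3, _⟩)
        · exact hnone x (h12.subset.trans h23.subset hxM1)
        · exact hnone x hxM3
  obtain ⟨x1, hx1⟩ := hM1ne
  rcases h2.2.2 X hXmod with hdisj | hsub | hsup
  · exact absurd (hdisj.ne_of_mem (Or.inl hx1) (h12.subset hx1)) (fun h => h rfl)
  · exact hy3M2 (hsub (Or.inr ⟨hy3M3, hy3M2⟩))
  · rcases hsup hy2M2 with h | ⟨_, h⟩
    · exact hy2M1 h
    · exact h hy2M2
end

section
/- For every graph G, every vertex x of G belongs to at most 2·χ(G) distinct strong modules of G. -/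
open SimpleGraph

/-!
Strong modules through `x` pairwise intersect, so they form a chain `M₁ ⊂ M₂ ⊂ ⋯ ⊂ Mₖ`.
If some vertex of `Mᵢ₊₁ \ Mᵢ` is adjacent to all of `Mᵢ`, then `χ(Mᵢ₊₁) > χ(Mᵢ)`; otherwise,
`Mᵢ` being a module, `Mᵢ₊₁ \ Mᵢ` has no edge to `Mᵢ`. Two consecutive steps `X ⊂ Y ⊂ Z` of the
second kind are impossible, since `X ∪ (Z \ Y)` would be a module overlapping the strong module
`Y`. Hence `χ` grows at least every second step, and `k ≤ 2χ(Mₖ) ≤ 2χ(G)`.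
-/

theorem Finset.exists_isGreatest_of_isChain {α : Type*} [Preorder α] {s : Finset α}
    (hs : IsChain (· ≤ ·) (s : Set α)) (hne : s.Nonempty) : ∃ t, IsGreatest (s : Set α) t := by
  obtain ⟨t, ht⟩ := s.exists_maximal hne
  exact ⟨t, ht.1, hs.directedOn.is_top_of_is_max ht.1 fun _ ha => ht.2 ha⟩

theorem Finset.lt_of_mem_erase_of_isGreatest {α : Type*} [PartialOrder α] [DecidableEq α]
    {s : Finset α} {a c : α} (hc : IsGreatest (s : Set α) c) (ha : a ∈ s.erase c) : a < c :=
  lt_of_le_of_ne (hc.2 (mem_of_mem_erase ha)) (ne_of_mem_erase ha)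

theorem Finset.card_le_two_mul_of_isChain {α : Type*} [PartialOrder α] {f : α → ℕ∞} {m : ℕ∞}
    {s : Finset α} (hs : IsChain (· ≤ ·) (s : Set α)) (hpos : ∀ a ∈ s, 1 ≤ f a)
    (hle : ∀ a ∈ s, f a ≤ m) (hgap : ∀ a ∈ s, ∀ b ∈ s, ∀ c ∈ s, a < b → b < c → f a + 1 ≤ f c) :
    (s.card : ℕ∞) ≤ 2 * m := by
  classical
  induction m using ENat.recTopCoe generalizing s with
  | top => simp
  | coe m =>
    norm_cast
    induction m generalizing s with
    | zero =>
      simp only [mul_zero, Nat.le_zero, card_eq_zero, eq_empty_iff_forall_notMem]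
      exact fun a ha => absurd ((hpos a ha).trans (hle a ha)) (by simp)
    | succ m ih =>
      by_cases hsmall : s.card ≤ 2
      · omega
      obtain ⟨c, hc⟩ := s.exists_isGreatest_of_isChain hs (card_pos.mp (by omega))
      obtain ⟨b, hb⟩ := (s.erase c).exists_isGreatest_of_isChain (hs.mono (by simp))
        (card_pos.mp (by rw [card_erase_of_mem hc.1]; omega))
      have hsub : (s.erase c).erase b ⊆ s := (erase_subset _ _).trans (erase_subset _ _)
      have hle' : ∀ a ∈ (s.erase c).erase b, f a ≤ m := by
        intro a ha
        have := (hgap a (hsub ha) b (mem_of_mem_erase hb.1) c hc.1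
          (lt_of_mem_erase_of_isGreatest hb ha) (lt_of_mem_erase_of_isGreatest hc hb.1)).trans
          (hle c hc.1)
        push_cast at this
        exact (ENat.add_le_add_iff_right ENat.one_ne_top).mp this
      have hcard := ih (hs.mono (coe_subset.mpr hsub)) (fun a ha => hpos a (hsub ha)) hle'
        (fun a ha b hb c hc => hgap a (hsub ha) b (hsub hb) c (hsub hc))
      rw [card_erase_of_mem hb.1, card_erase_of_mem hc.1] at hcard
      omega

section Modules

variable {V : Type} {G : SimpleGraph V}

theorem IsStrongModule.subset_or_subset_of_mem {X M : Set V} {x : V}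
    (hX : IsStrongModule G X) (hM : IsModule G M) (hxX : x ∈ X) (hxM : x ∈ M) :
    M ⊆ X ∨ X ⊆ M :=
  (hX.2.2 M hM).resolve_left (Set.not_disjoint_iff.mpr ⟨x, hxM, hxX⟩)

theorem IsModule.union_diff_of_not_adj {X Y Z : Set V} (hZ : IsModule G Z) (hXZ : X ⊆ Z)
    (hX : ∀ y ∈ Y \ X, ∀ z ∈ X, ¬G.Adj y z) (hY : ∀ z ∈ Z \ Y, ∀ y ∈ Y, ¬G.Adj z y) :
    IsModule G (X ∪ Z \ Y) := by
  intro w hw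
  by_cases hwY : w ∈ Y
  · right
    rintro v (hv | hv)
    · exact hX w ⟨hwY, fun h => hw (.inl h)⟩ v hv
    · exact fun h => hY v hv w hwY h.symm
  · have hwZ : w ∉ Z := fun h => hw (.inr ⟨h, hwY⟩)
    have hsub : X ∪ Z \ Y ⊆ Z := Set.union_subset hXZ Set.sdiff_subset
    exact (hZ w hwZ).imp (fun h v hv => h v (hsub hv)) (fun h v hv => h v (hsub hv))

theorem chromaticNumber_induce_mono {X Y : Set V} (h : X ⊆ Y) :
    (G.induce X).chromaticNumber ≤ (G.induce Y).chromaticNumber :=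
  chromaticNumber_mono_of_hom (induceHomOfLE G h).toHom

theorem chromaticNumber_induce_add_one_le_of_forall_adj {X Y : Set V} {y : V} (hXY : X ⊆ Y) (hy : y ∈ Y)
    (hadj : ∀ z ∈ X, G.Adj y z) :
    (G.induce X).chromaticNumber + 1 ≤ (G.induce Y).chromaticNumber := by
  rw [chromaticNumber_eq_biInf (G := G.induce Y)]
  refine le_iInf₂ fun n ⟨C⟩ => ?_
  let a := C ⟨y, hy⟩
  have hX : (G.induce X).Colorable (n - 1) := by
    have C' : (G.induce X).Coloring {b // b ≠ a} :=
      Coloring.mk (fun v => ⟨C ⟨v, hXY v.2⟩, C.valid (by simpa using (hadj v v.2).symm)⟩)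
        fun huv h => C.valid (by simpa using huv) (congrArg Subtype.val h)
    simpa [Fintype.card_subtype_compl] using C'.colorable
  have hn : 0 < n := a.pos
  calc (G.induce X).chromaticNumber + 1 ≤ (n - 1 : ℕ) + 1 := by gcongr; exact hX.chromaticNumber_le
    _ = n := by norm_cast; omega

theorem IsStrongModule.chromaticNumber_induce_add_one_le {X Y Z : Set V}
    (hY : IsStrongModule G Y) (hX : IsModule G X) (hZ : IsModule G Z) (hXne : X.Nonempty)
    (hXY : X ⊂ Y) (hYZ : Y ⊂ Z) :
    (G.induce X).chromaticNumber + 1 ≤ (G.induce Z).chromaticNumber := by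
  by_cases hXY' : ∃ y ∈ Y \ X, ∀ z ∈ X, G.Adj y z
  · obtain ⟨y, hy, hadj⟩ := hXY'
    exact (chromaticNumber_induce_add_one_le_of_forall_adj hXY.subset hy.1 hadj).trans
      (chromaticNumber_induce_mono hYZ.subset)
  by_cases hYZ' : ∃ z ∈ Z \ Y, ∀ y ∈ Y, G.Adj z y
  · obtain ⟨z, hz, hadj⟩ := hYZ'
    exact (add_le_add_left (chromaticNumber_induce_mono hXY.subset) 1).trans
      (chromaticNumber_induce_add_one_le_of_forall_adj hYZ.subset hz.1 hadj)
  have hM : IsModule G (X ∪ Z \ Y) := hZ.union_diff_of_not_adj (hXY.subset.trans hYZ.subset)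
    (fun y hy => (hX y hy.2).resolve_left fun h => hXY' ⟨y, hy, h⟩)
    (fun z hz => (hY.1 z hz.2).resolve_left fun h => hYZ' ⟨z, hz, h⟩)
  obtain ⟨x, hx⟩ := hXne
  obtain ⟨y, hyY, hyX⟩ := Set.exists_of_ssubset hXY
  obtain ⟨z, hzZ, hzY⟩ := Set.exists_of_ssubset hYZ
  rcases hY.2.2 _ hM with h | h | h
  · exact absurd (hXY.subset hx) (Set.disjoint_left.mp h (.inl hx))
  · exact absurd (h (.inr ⟨hzZ, hzY⟩)) hzY
  · exact ((h hyY).elim hyX fun h => h.2 hyY).elim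

end Modules

theorem strong_modules_through_vertex_general (V : Type) (G : SimpleGraph V)
    (x : V) :
    ({M : Set V | IsStrongModule G M ∧ x ∈ M}.ncard : ℕ∞) ≤
      2 * G.chromaticNumber := by
  set S := {M : Set V | IsStrongModule G M ∧ x ∈ M}
  obtain hS | hS := S.finite_or_infinite
  swap
  · simp [hS.ncard]
  rw [Set.ncard_eq_toFinset_card S hS]
  refine Finset.card_le_two_mul_of_isChain (f := fun M => (G.induce M).chromaticNumber)
    ?_ ?_ ?_ ?_ <;> simp only [Set.Finite.coe_toFinset, Set.Finite.mem_toFinset]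
  · intro M hM N hN _
    exact hN.1.subset_or_subset_of_mem hM.1.1 hN.2 hM.2
  · intro M hM
    rw [Order.one_le_iff_ne_zero, Ne, chromaticNumber_eq_zero_iff, not_isEmpty_iff]
    exact ⟨⟨x, hM.2⟩⟩
  · exact fun M _ => chromaticNumber_mono_of_hom (Embedding.induce M).toHom
  · exact fun X hX Y hY Z hZ hXY hYZ =>
      hY.1.chromaticNumber_induce_add_one_le hX.1.1 hZ.1.1 ⟨x, hX.2⟩ hXY hYZ

/-- Every vertex of a graph `G` belongs to at most `2·χ(G)`
distinct strong modules of `G`. -/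
theorem strong_modules_through_vertex (V : Type) [Fintype V] (G : SimpleGraph V)
    (x : V) :
    ({M : Set V | IsStrongModule G M ∧ x ∈ M}.ncard : ℕ∞) ≤
      2 * G.chromaticNumber :=
  strong_modules_through_vertex_general V G x
end
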